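/- arXiv:1706.06707 — 2 statements merged into one kernel-verified Lean document; each statement's English description precedes it below -/
import Mathlib

section
/- Let k be an algebraically closed field of characteristic p ≥ 0, and let A = (A_{ij}) be a 4×4 matrix of nonnegative integers with det(A) ≠ 0 and p ∤ det(A). Then the group Aut(F_A) = {λ ∈ (k×)⁴ : F_A(λ₀x₀,λ₁x₁,λ₂x₂,λ₃x₃) = F_A(x₀,x₁,x₂,x₃)} is finite of cardinality |det(A)|. -/
open MvPolynomial

/-- The polynomial `F_A` associated to a 4×4 matrix of nonnegative integers. -/
noncomputable def FA (k : Type*) [CommRing k] (A : Matrix (Fin 4) (Fin 4) ℕ) :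
    MvPolynomial (Fin 4) k :=
  ∑ i : Fin 4, ∏ j : Fin 4, (X j : MvPolynomial (Fin 4) k) ^ A i j

/-- The group `Aut(F_A)` of diagonal symmetries of `F_A`. -/
def AutFA (k : Type*) [Field k] (A : Matrix (Fin 4) (Fin 4) ℕ) : Set (Fin 4 → kˣ) :=
  {lam | (aeval fun j : Fin 4 => C ((lam j : k)) * X j) (FA k A) = FA k A}

/-! The diagonal scaling `λ` multiplies the `i`-th monomial of `F_A` by the character value
`∏ⱼ λⱼ ^ A i j`. Since `det A ≠ 0` the rows of `A`, hence these monomials, are distinct, so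
`Aut(F_A)` consists of the `λ` killed by all these characters: it is the character group
`Hom(ℤ⁴ ⧸ L, kˣ)`, where `L` is the lattice spanned by the rows of `A`. The quotient `ℤ⁴ ⧸ L` has
order `|det A|` (Smith normal form), and a finite abelian group whose order is invertible in the
algebraically closed field `k` has exactly as many `kˣ`-valued characters as elements. -/

section Monomials

variable {σ R : Type*} [CommSemiring R]

theorem sum_monomial_injective {ι : Type*} [Fintype ι] {d : ι → σ →₀ ℕ}
    (hd : Function.Injective d) :
    Function.Injective fun a : ι → R => ∑ i, monomial (d i) (a i) := by
  classical
  intro a b h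
  funext i
  simpa [coeff_sum, coeff_monomial, hd.eq_iff] using congrArg (coeff (d i)) h

variable [Fintype σ]

theorem prod_X_pow_eq_monomial_equivFunOnFinite (s : σ → ℕ) :
    ∏ j, (X j : MvPolynomial σ R) ^ s j = monomial (Finsupp.equivFunOnFinite.symm s) 1 := by
  rw [monomial_eq, C_1, one_mul, Finsupp.prod_fintype _ _ fun _ => pow_zero _]
  rfl

theorem aeval_C_mul_X_monomial (c : σ → R) (s : σ →₀ ℕ) (a : R) :
    aeval (fun j => C (c j) * X j) (monomial s a) = monomial s (a * ∏ j, c j ^ s j) := by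
  rw [aeval_monomial, Finsupp.prod_fintype _ _ fun _ => pow_zero _, monomial_eq,
    Finsupp.prod_fintype _ _ fun _ => pow_zero _]
  simp only [mul_pow, Finset.prod_mul_distrib, ← C_pow, ← map_prod, C_mul, algebraMap_eq,
    mul_assoc]

theorem aeval_C_mul_X_sum_prod_X_pow {ι : Type*} [Fintype ι] (c : σ → R) (A : Matrix ι σ ℕ) :
    aeval (fun j => C (c j) * X j) (∑ i, ∏ j, (X j : MvPolynomial σ R) ^ A i j) =
      ∑ i, monomial (Finsupp.equivFunOnFinite.symm (A i)) (∏ j, c j ^ A i j) := by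
  simp only [map_sum, prod_X_pow_eq_monomial_equivFunOnFinite, aeval_C_mul_X_monomial, one_mul]
  rfl

end Monomials

theorem mem_autFA_iff {k : Type*} [Field k] {A : Matrix (Fin 4) (Fin 4) ℕ}
    (hA : Function.Injective A) (lam : Fin 4 → kˣ) :
    lam ∈ AutFA k A ↔ ∀ i, ∏ j, lam j ^ A i j = 1 := by
  have hd : Function.Injective fun i => Finsupp.equivFunOnFinite.symm (A i) :=
    Finsupp.equivFunOnFinite.symm.injective.comp hA
  rw [AutFA, Set.mem_ofPred_eq, FA, aeval_C_mul_X_sum_prod_X_pow]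
  simp_rw [prod_X_pow_eq_monomial_equivFunOnFinite]
  rw [(sum_monomial_injective hd).eq_iff' rfl]
  simp [funext_iff, Units.ext_iff]

def Submodule.liftQEquiv {R M P : Type*} [Ring R] [AddCommGroup M] [Module R M]
    [AddCommGroup P] [Module R P] (N : Submodule R M) :
    {φ : M →ₗ[R] P // N ≤ LinearMap.ker φ} ≃ (M ⧸ N →ₗ[R] P) where
  toFun φ := N.liftQ φ.1 φ.2
  invFun ψ := ⟨ψ ∘ₗ N.mkQ, N.ker_mkQ.ge.trans (LinearMap.ker_le_ker_comp _ _)⟩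
  left_inv _ := Subtype.ext (N.liftQ_mkQ _ _)
  right_inv _ := N.linearMap_qext (N.liftQ_mkQ _ _)

section Characters

variable {ι ι' G : Type*} [Fintype ι] [DecidableEq ι] [CommGroup G]

theorem span_range_le_ker_piRing_symm_iff (B : ι' → ι → ℤ) (lam : ι → G) :
    Submodule.span ℤ (Set.range B) ≤
        LinearMap.ker ((LinearEquiv.piRing ℤ (Additive G) ι ℤ).symm (Additive.ofMul ∘ lam)) ↔
      ∀ i, ∏ j, lam j ^ B i j = 1 := by
  simp only [Submodule.span_le, Set.range_subset_iff, SetLike.mem_coe, LinearMap.mem_ker,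
    LinearEquiv.piRing_symm_apply, Function.comp_apply, ← ofMul_zpow, ← ofMul_prod,
    ofMul_eq_zero]

/-- `lam` corresponds to the character `n ↦ ∏ j, lam j ^ n j` of `ℤ^ι`. -/
def solutionsEquivMonoidHomQuotient (B : ι' → ι → ℤ) :
    {lam : ι → G // ∀ i, ∏ j, lam j ^ B i j = 1} ≃
      (Multiplicative ((ι → ℤ) ⧸ Submodule.span ℤ (Set.range B)) →* G) :=
  ((Equiv.piCongrRight fun _ => Additive.ofMul).trans
      (LinearEquiv.piRing ℤ (Additive G) ι ℤ).symm.toEquiv).subtypeEquiv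
      (fun lam => (span_range_le_ker_piRing_symm_iff B lam).symm)
    |>.trans (Submodule.liftQEquiv _)
    |>.trans (addMonoidHomLequivInt ℤ).symm.toEquiv
    |>.trans AddMonoidHom.toMultiplicativeLeft

end Characters

theorem card_monoidHom_units_eq_card (k : Type*) [Field k] [IsSepClosed k] (H : Type*)
    [CommGroup H] [Finite H] (hH : (Nat.card H : k) ≠ 0) :
    Nat.card (H →* kˣ) = Nat.card H := by
  obtain ⟨c, hc⟩ := Group.exponent_dvd_nat_card (G := H)
  have : NeZero (Monoid.exponent H : k) :=
    ⟨fun h => hH (by rw [hc, Nat.cast_mul, h, zero_mul])⟩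
  exact Nat.card_congr (CommGroup.monoidHom_mulEquiv_of_hasEnoughRootsOfUnity H k).some.toEquiv

theorem Matrix.card_quotient_span_range_eq_natAbs_det {ι : Type*} [Fintype ι] [DecidableEq ι]
    (B : Matrix ι ι ℤ) (hB : B.det ≠ 0) :
    Nat.card ((ι → ℤ) ⧸ Submodule.span ℤ (Set.range B)) = B.det.natAbs := by
  have hrows := Matrix.linearIndependent_rows_of_det_ne_zero hB
  rw [← Submodule.natAbs_det_basis_change (Pi.basisFun ℤ ι) _ (Module.Basis.span hrows),
    show ((↑) ∘ Module.Basis.span hrows : ι → ι → ℤ) = B from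
      funext (Module.Basis.coe_span_apply hrows)]
  exact congrArg Int.natAbs (Pi.basisFun_det_apply B)

/-- Over an algebraically closed field `k` of characteristic `p ≥ 0`, if `det A ≠ 0` and
`p ∤ det A`, then `Aut(F_A)` is finite of cardinality `|det A|`. -/
theorem autFA_finite_card_det
    (k : Type*) [Field k] [IsAlgClosed k] (A : Matrix (Fin 4) (Fin 4) ℕ)
    (hA : (A.map (Nat.cast : ℕ → ℤ)).det ≠ 0)
    (hp : ¬ ((ringChar k : ℤ) ∣ (A.map (Nat.cast : ℕ → ℤ)).det)) :
    (AutFA k A).Finite ∧ (AutFA k A).ncard = ((A.map (Nat.cast : ℕ → ℤ)).det).natAbs := by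
  set B := A.map (Nat.cast : ℕ → ℤ)
  set Q := Multiplicative ((Fin 4 → ℤ) ⧸ Submodule.span ℤ (Set.range B))
  have hrows : Function.Injective A := fun i i' h =>
    (Matrix.linearIndependent_rows_of_det_ne_zero hA).injective
      (by ext j; exact congrArg _ (congrFun h j))
  have hQ : Nat.card Q = B.det.natAbs :=
    (Nat.card_congr Multiplicative.toAdd).trans (B.card_quotient_span_range_eq_natAbs_det hA)
  have hQ0 : Nat.card Q ≠ 0 := hQ ▸ Int.natAbs_ne_zero.mpr hA
  have : Finite Q := Nat.finite_of_card_ne_zero hQ0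
  have hchar : (Nat.card Q : k) ≠ 0 := by
    rwa [hQ, Ne, ringChar.spec, ← Int.natCast_dvd]
  have hcard : Nat.card (AutFA k A) = Nat.card Q := calc
    Nat.card (AutFA k A) = Nat.card {lam : Fin 4 → kˣ // ∀ i, ∏ j, lam j ^ B i j = 1} :=
      Nat.card_congr <| Equiv.subtypeEquivRight fun lam => by simp [mem_autFA_iff hrows, B]
    _ = Nat.card (Q →* kˣ) := Nat.card_congr (solutionsEquivMonoidHomQuotient B)
    _ = Nat.card Q := card_monoidHom_units_eq_card k Q hchar
  refine ⟨Set.finite_coe_iff.mp (Nat.finite_of_card_ne_zero (hcard ▸ hQ0)), ?_⟩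
  rw [← Nat.card_coe_set_eq, hcard, hQ]
end

section
/- Let d ≥ 1, let p be a prime with p ∤ d, and let f denote the multiplicative order of p in (ℤ/d)×. Then for a ∈ 𝔄_d, one has a ∈ 𝔅_d(p) if and only if for every t ∈ (ℤ/d)×, the orbit of t·a under the cyclic subgroup ⟨p⟩ ⊆ (ℤ/d)× contains exactly as many elements of age 1 as elements of age 3. Consequently, for any subgroup H ⊆ (ℤ/d)⁴, the set 𝔈_d(p) ∩ H is the union of those (ℤ/d)×-orbits in 𝔄_d ∩ H that contain at least one ⟨p⟩-orbit having unequal numbers of elements of age 1 and of age 3. -/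
/-- `M_d`: quadruples in `(ℤ/d)⁴` whose coordinates sum to zero, with all coordinates
nonzero (here: the subset `𝔄_d ⊆ M_d`). -/
def frakA (d : ℕ) : Set (Fin 4 → ZMod d) :=
  {a | (∑ i, a i = 0) ∧ ∀ i, a i ≠ 0}

/-- The age `S(a) = Σᵢ ⟨âᵢ/d⟩`, where `âᵢ ∈ ℤ` is any lift of `aᵢ` (we use the canonical
lift `(a i).val`; the fractional part is independent of the choice of lift). -/
noncomputable def age {d : ℕ} (a : Fin 4 → ZMod d) : ℚ :=
  ∑ i, Int.fract (((a i).val : ℚ) / d)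

/-- `𝔅_d(0)`: elements of `𝔄_d` all of whose `(ℤ/d)ˣ`-multiples have age 2. -/
noncomputable def frakB0 (d : ℕ) : Set (Fin 4 → ZMod d) :=
  {a ∈ frakA d | ∀ t : (ZMod d)ˣ, age (fun i => (t : ZMod d) * a i) = 2}

/-- `𝔈_d(0) = 𝔄_d \ 𝔅_d(0)` (denoted `𝔍_d(0)` in the paper). -/
noncomputable def frakE0 (d : ℕ) : Set (Fin 4 → ZMod d) :=
  frakA d \ frakB0 d

/-- `𝔅_d(p)` for a prime `p ∤ d`, where `f = orderOf (p : ZMod d)` is the multiplicative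
order of `p` mod `d`: elements `a ∈ 𝔄_d` with `Σ_{j<f} S(t·pʲ·a) = 2f` for all
`t ∈ (ℤ/d)ˣ`. -/
noncomputable def frakBp (d p : ℕ) : Set (Fin 4 → ZMod d) :=
  {a ∈ frakA d | ∀ t : (ZMod d)ˣ,
    ∑ j ∈ Finset.range (orderOf (p : ZMod d)),
      age (fun i => (t : ZMod d) * (p : ZMod d) ^ j * a i) =
        2 * (orderOf (p : ZMod d) : ℚ)}

/-- `𝔈_d(p) = 𝔄_d \ 𝔅_d(p)` (denoted `𝔍_d(p)` in the paper). -/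
noncomputable def frakEp (d p : ℕ) : Set (Fin 4 → ZMod d) :=
  frakA d \ frakBp d p

/-- The orbit of `b ∈ (ℤ/d)⁴` under the cyclic subgroup `⟨p⟩ ⊆ (ℤ/d)ˣ`. -/
def pOrbit (d p : ℕ) (b : Fin 4 → ZMod d) : Set (Fin 4 → ZMod d) :=
  {x | ∃ j : ℕ, x = fun i => (p : ZMod d) ^ j * b i}

/-! The age of every `b ∈ 𝔄_d` is `1`, `2` or `3`. Hence in `Σ_{j<f} (S(pʲ·b) - 2)` each element of
the `⟨p⟩`-orbit of `b` contributes `+1` (age 3), `-1` (age 1) or `0`, counted with multiplicity the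
order of the stabiliser of `b` in `⟨p⟩`. So the sum vanishes iff the orbit has as many elements
of age 1 as of age 3. -/

open Finset MulAction Subgroup

section OrbitSum
variable {G α M : Type*} [Group G] [Fintype G] [MulAction G α] [DecidableEq α]

lemma card_filter_smul_eq_smul (b : α) (h : G) :
    #{g : G | g • b = h • b} = #{g : G | g • b = b} :=
  (card_equiv (Equiv.mulLeft h) fun g => by simp [mul_smul]).symm

lemma sum_smul_eq_card_smul_sum_image [AddCommMonoid M] (φ : α → M) (b : α) :
    ∑ g : G, φ (g • b) = #{g : G | g • b = b} • ∑ x ∈ (univ : Finset G).image (· • b), φ x := by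
  rw [sum_comp, smul_sum]
  refine sum_congr rfl fun x hx => ?_
  obtain ⟨h, -, rfl⟩ := mem_image.mp hx
  rw [card_filter_smul_eq_smul]

end OrbitSum

lemma sum_range_orderOf_pow_smul {G α M : Type*} [Group G] [MulAction G α] [AddCommMonoid M]
    {u : G} (hu : IsOfFinOrder u) [Fintype (zpowers u)] (φ : α → M) (b : α) :
    ∑ j ∈ range (orderOf u), φ (u ^ j • b) = ∑ g : zpowers u, φ (g • b) := by
  rw [← Fin.sum_univ_eq_sum_range (fun j => φ (u ^ j • b)), ← (finEquivZPowers hu).sum_comp]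
  rfl

lemma units_smul_mem_frakA {d : ℕ} (u : (ZMod d)ˣ) {a : Fin 4 → ZMod d} (ha : a ∈ frakA d) :
    u • a ∈ frakA d :=
  ⟨by simp [← smul_sum, ha.1], fun i => (smul_eq_zero_iff_eq u).not.mpr (ha.2 i)⟩

section Age
variable {d : ℕ} [NeZero d]

lemma age_eq_sum_val_div (a : Fin 4 → ZMod d) : age a = (∑ i, (a i).val : ℕ) / d := by
  rw [age]
  push_cast
  rw [sum_div]
  refine sum_congr rfl fun i _ => Int.fract_eq_self.mpr ⟨by positivity, ?_⟩
  rw [div_lt_one (Nat.cast_pos.mpr (NeZero.pos d))]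
  exact_mod_cast ZMod.val_lt _

lemma age_eq_one_or_two_or_three {a : Fin 4 → ZMod d} (ha : a ∈ frakA d) :
    age a = 1 ∨ age a = 2 ∨ age a = 3 := by
  obtain ⟨k, hk⟩ : d ∣ ∑ i, (a i).val := by
    rw [← ZMod.natCast_eq_zero_iff]
    push_cast [ZMod.natCast_zmod_val]
    exact ha.1
  have hpos : 0 < d * k := hk ▸ sum_pos (fun i _ => ZMod.val_pos.mpr (ha.2 i)) univ_nonempty
  have hlt : d * k < d * 4 := hk ▸ (sum_lt_sum_of_nonempty univ_nonempty
    fun i _ => ZMod.val_lt (a i)).trans_eq (by simp [mul_comm])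
  have hage : age a = k := by
    rw [age_eq_sum_val_div, hk]
    push_cast
    exact mul_div_cancel_left₀ _ (Nat.cast_ne_zero.mpr (NeZero.ne d))
  have : k < 4 := Nat.lt_of_mul_lt_mul_left hlt
  interval_cases k <;> simp_all

lemma sum_age_sub_two {s : Finset (Fin 4 → ZMod d)} (hs : ∀ x ∈ s, x ∈ frakA d) :
    ∑ x ∈ s, (age x - 2) = #{x ∈ s | age x = 3} - #{x ∈ s | age x = 1} := by
  rw [← sum_boole, ← sum_boole, ← sum_sub_distrib]
  refine sum_congr rfl fun x hx => ?_
  rcases age_eq_one_or_two_or_three (hs x hx) with h | h | h <;> norm_num [h]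

end Age

lemma sum_age_pow_smul_eq_iff {d : ℕ} [NeZero d] (u : (ZMod d)ˣ) {b : Fin 4 → ZMod d}
    (hb : b ∈ frakA d) :
    ∑ j ∈ range (orderOf u), age (u ^ j • b) = 2 * orderOf u ↔
      {x ∈ orbit (zpowers u) b | age x = 1}.ncard =
        {x ∈ orbit (zpowers u) b | age x = 3}.ncard := by
  classical
  set O := (univ : Finset (zpowers u)).image (· • b)
  have hO : ∀ x ∈ O, x ∈ frakA d := by
    simp only [O, mem_image, mem_univ, true_and, forall_exists_index]
    rintro _ g rfl
    exact units_smul_mem_frakA (g : (ZMod d)ˣ) hb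
  have hcount (r : ℚ) : {x ∈ orbit (zpowers u) b | age x = r}.ncard = #{x ∈ O | age x = r} := by
    rw [← Set.ncard_coe_finset]
    congr
    ext x
    simp [O, orbit]
  have hfix : #{g : zpowers u | g • b = b} ≠ 0 := card_ne_zero.mpr ⟨1, by simp⟩
  have hsum : ∑ j ∈ range (orderOf u), age (u ^ j • b) - 2 * orderOf u =
      #{g : zpowers u | g • b = b} * (#{x ∈ O | age x = 3} - #{x ∈ O | age x = 1} : ℚ) := by
    calc _ = ∑ j ∈ range (orderOf u), (age (u ^ j • b) - 2) := by simp [sum_sub_distrib, mul_comm]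
      _ = _ := by
        rw [sum_range_orderOf_pow_smul (isOfFinOrder_of_finite u) (fun x => age x - 2),
          sum_smul_eq_card_smul_sum_image (fun x => age x - 2) b, sum_age_sub_two hO, nsmul_eq_mul]
  rw [hcount, hcount, ← sub_eq_zero, hsum, mul_eq_zero, sub_eq_zero, Nat.cast_inj]
  exact (or_iff_right (by exact_mod_cast hfix)).trans eq_comm

lemma pOrbit_eq_orbit_zpowers {d p : ℕ} [NeZero d] (hpd : p.Coprime d) (b : Fin 4 → ZMod d) :
    pOrbit d p b = orbit (zpowers (ZMod.unitOfCoprime p hpd)) b := by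
  ext x
  simp only [pOrbit, orbit, Set.mem_ofPred_eq, Set.mem_range, Subtype.exists,
    ← mem_powers_iff_mem_zpowers, Submonoid.mem_powers_iff, exists_prop, exists_exists_eq_and,
    Subgroup.mk_smul]
  refine exists_congr fun j => eq_comm.trans (Iff.of_eq (congrArg (· = x) ?_))
  ext i
  simp [Units.smul_def]

lemma mem_frakBp_iff {d p : ℕ} [NeZero d] (hpd : p.Coprime d) {a : Fin 4 → ZMod d}
    (ha : a ∈ frakA d) :
    a ∈ frakBp d p ↔ ∀ t : (ZMod d)ˣ,
      {x ∈ pOrbit d p (fun i => (t : ZMod d) * a i) | age x = 1}.ncard =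
        {x ∈ pOrbit d p (fun i => (t : ZMod d) * a i) | age x = 3}.ncard := by
  set u := ZMod.unitOfCoprime p hpd
  have hu : (u : ZMod d) = p := ZMod.coe_unitOfCoprime p hpd
  simp only [frakBp, Set.mem_sep_iff, ha, true_and]
  refine forall_congr' fun t => ?_
  have hta : (fun i => (t : ZMod d) * a i) = t • a := rfl
  rw [hta, pOrbit_eq_orbit_zpowers hpd, ← sum_age_pow_smul_eq_iff u (units_smul_mem_frakA t ha),
    ← hu, orderOf_units]
  refine Iff.of_eq (congrArg (· = _) (sum_congr rfl fun j _ => congrArg age (funext fun i => ?_)))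
  simp only [Pi.smul_apply, Units.smul_def, smul_eq_mul, Units.val_pow_eq_pow_val]
  ring

theorem frakBp_iff_orbit_balanced_general (d : ℕ) (p : ℕ) (hp : p.Prime)
    (hpd : ¬ p ∣ d) :
    (∀ a ∈ frakA d, a ∈ frakBp d p ↔
      ∀ t : (ZMod d)ˣ,
        {x ∈ pOrbit d p (fun i => (t : ZMod d) * a i) | age x = 1}.ncard =
          {x ∈ pOrbit d p (fun i => (t : ZMod d) * a i) | age x = 3}.ncard) ∧
    ∀ H : AddSubgroup (Fin 4 → ZMod d),
      frakEp d p ∩ H = {a | a ∈ frakA d ∧ a ∈ H ∧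
        ∃ t : (ZMod d)ˣ,
          {x ∈ pOrbit d p (fun i => (t : ZMod d) * a i) | age x = 1}.ncard ≠
            {x ∈ pOrbit d p (fun i => (t : ZMod d) * a i) | age x = 3}.ncard} := by
  have hcop : p.Coprime d := (Nat.Prime.coprime_iff_not_dvd hp).mpr hpd
  have : NeZero d := ⟨by rintro rfl; exact hpd (dvd_zero p)⟩
  refine ⟨fun a => mem_frakBp_iff hcop, fun H => ?_⟩
  ext a
  by_cases ha : a ∈ frakA d
  · simp [frakEp, ha, mem_frakBp_iff hcop ha, and_comm]
  · simp [frakEp, ha]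

/-- For a prime `p ∤ d`: `a ∈ 𝔅_d(p)` iff for every `t ∈ (ℤ/d)ˣ` the `⟨p⟩`-orbit of `t·a`
contains as many elements of age 1 as of age 3.  Consequently, for a subgroup
`H ⊆ (ℤ/d)⁴`, the set `𝔈_d(p) ∩ H` is the union of those `(ℤ/d)ˣ`-orbits in `𝔄_d ∩ H`
containing at least one `⟨p⟩`-orbit with unequal numbers of elements of age 1 and age 3. -/
theorem frakBp_iff_orbit_balanced (d : ℕ) (hd : 1 ≤ d) (p : ℕ) (hp : p.Prime)
    (hpd : ¬ p ∣ d) :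
    (∀ a ∈ frakA d, a ∈ frakBp d p ↔
      ∀ t : (ZMod d)ˣ,
        {x ∈ pOrbit d p (fun i => (t : ZMod d) * a i) | age x = 1}.ncard =
          {x ∈ pOrbit d p (fun i => (t : ZMod d) * a i) | age x = 3}.ncard) ∧
    ∀ H : AddSubgroup (Fin 4 → ZMod d),
      frakEp d p ∩ H = {a | a ∈ frakA d ∧ a ∈ H ∧
        ∃ t : (ZMod d)ˣ,
          {x ∈ pOrbit d p (fun i => (t : ZMod d) * a i) | age x = 1}.ncard ≠
            {x ∈ pOrbit d p (fun i => (t : ZMod d) * a i) | age x = 3}.ncard} :=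
  frakBp_iff_orbit_balanced_general d p hp hpd
end
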